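/- Suppose lim_{I₀→0}(1/I₀)[SI]'(0) = β(⟨k⟩²/2 − (3/2)⟨k⟩) − (γ+p)⟨k⟩ and lim_{I₀→0}(1/I₀)İ(0) = β⟨k⟩ − γ. Then lim_{I₀→0}(1/I₀)Ï(0) = β(β(⟨k⟩²/2 − (3/2)⟨k⟩) − (γ+p)⟨k⟩) − γ(β⟨k⟩ − γ), and this quantity is negative if and only if p > p₂* = β(⟨k⟩/2 − 3/2) − 2γ + γ²/(β⟨k⟩). -/

import Mathlib

/-- The limit of `Ï(0) / I₀` factors as `β⟨k⟩ (p₂* − p)`, so its sign is that of `p₂* − p`. -/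
theorem limit_scaled_second_derivative_eq (β γ p k : ℝ) (hβ : β ≠ 0) (hk : k ≠ 0) :
    β * (β * (k ^ 2 / 2 - 3 / 2 * k) - (γ + p) * k) - γ * (β * k - γ) =
      β * k * (β * (k / 2 - 3 / 2) - 2 * γ + γ ^ 2 / (β * k) - p) := by
  field_simp
  ring

theorem stmt9_general (β γ p k : ℝ) (hβ : 0 < β) (hk : 0 < k)
    (fSI fI : ℝ → ℝ)
    (hSI : Filter.Tendsto fSI (nhdsWithin 0 (Set.Ioi 0))
      (nhds (β * (k ^ 2 / 2 - 3 / 2 * k) - (γ + p) * k)))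
    (hI : Filter.Tendsto fI (nhdsWithin 0 (Set.Ioi 0)) (nhds (β * k - γ))) :
    Filter.Tendsto (fun I₀ => β * fSI I₀ - γ * fI I₀) (nhdsWithin 0 (Set.Ioi 0))
      (nhds (β * (β * (k ^ 2 / 2 - 3 / 2 * k) - (γ + p) * k) - γ * (β * k - γ))) ∧
    (β * (β * (k ^ 2 / 2 - 3 / 2 * k) - (γ + p) * k) - γ * (β * k - γ) < 0 ↔
      β * (k / 2 - 3 / 2) - 2 * γ + γ ^ 2 / (β * k) < p) := by
  have hβk : 0 < β * k := mul_pos hβ hk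
  refine ⟨(hSI.const_mul β).sub (hI.const_mul γ), ?_⟩
  rw [limit_scaled_second_derivative_eq β γ p k hβ.ne' hk.ne', ← mul_zero (β * k),
    mul_lt_mul_iff_right₀ hβk, sub_neg]

/-- if (1/I₀)[SI]'(0) → A := β(⟨k⟩²/2 − (3/2)⟨k⟩) − (γ+p)⟨k⟩ and
(1/I₀)İ(0) → β⟨k⟩ − γ, then (1/I₀)Ï(0) = β·(scaled [SI]') − γ·(scaled İ) tends to
βA − γ(β⟨k⟩ − γ), which is negative iff p > p₂* = β(⟨k⟩/2 − 3/2) − 2γ + γ²/(β⟨k⟩). -/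
theorem stmt9 (β γ p k : ℝ) (hβ : 0 < β) (hγ : 0 < γ) (hp : 0 ≤ p) (hk : 0 < k)
    (fSI fI : ℝ → ℝ)
    (hSI : Filter.Tendsto fSI (nhdsWithin 0 (Set.Ioi 0))
      (nhds (β * (k ^ 2 / 2 - 3 / 2 * k) - (γ + p) * k)))
    (hI : Filter.Tendsto fI (nhdsWithin 0 (Set.Ioi 0)) (nhds (β * k - γ))) :
    Filter.Tendsto (fun I₀ => β * fSI I₀ - γ * fI I₀) (nhdsWithin 0 (Set.Ioi 0))
      (nhds (β * (β * (k ^ 2 / 2 - 3 / 2 * k) - (γ + p) * k) - γ * (β * k - γ))) ∧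
    (β * (β * (k ^ 2 / 2 - 3 / 2 * k) - (γ + p) * k) - γ * (β * k - γ) < 0 ↔
      β * (k / 2 - 3 / 2) - 2 * γ + γ ^ 2 / (β * k) < p) :=
  stmt9_general β γ p k hβ hk fSI fI hSI hI
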